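/- For every ε ∈ ℰ, every 1 ≤ i ≤ N and every ε' ∈ ℰ, the following hold in Sym_ℤ(Λ): (a) if i ∈ π₋(ε), then σᵀ_{(i)}(ε')·σᵀ_ε(ε') = σᵀ_{ε+(i)}(ε'); (b) if i ∈ π₊(ε), then σᵀ_{(i)}(ε')·σᵀ_ε(ε') = σᵀ_{(i)}(ε)·σᵀ_ε(ε') + Σ_{j<i, j∈π₋(ε)} ⟨v_{j+1}^{i}(ε)(μ_i), μ_j^∨⟩ · σᵀ_{ε+(j)}(ε'). (This is the multiplication rule for the equivariant cohomology basis of the Bott–Samelson variety Γ(μ_1,…,μ_N), expressed on restrictions to fixed points.) -/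

import Mathlib

/-!
Part (a) is the product formula for `σᵀ`: `σᵀ_{(i)}(ε') = -α_i(ε')` when `ε'_i = 1`, and
`ε + (i) ≤ ε'` iff `ε ≤ ε'` and `ε'_i = 1`. By (a), each `σᵀ_{ε+(j)}(ε')` in (b) equals
`σᵀ_{(j)}(ε') σᵀ_ε(ε')`, so for `ε ≤ ε'` (b) reduces to the identity
`α_i(ε') - α_i(ε) = Σ_{j < i, ε_j = 0, ε'_j = 1} ⟨v_{j+1}^i(ε)(μ_i), μ_j^∨⟩ α_j(ε')`.
The ordered products `v_i(ε')` and `v_i(ε)` differ exactly in the factors `s_{μ_j}` with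
`ε_j = 0`, `ε'_j = 1`; telescoping over these factors, each term is
`v_{j-1}(ε') (s_{μ_j} - 1) v_{j+1}^i(ε) μ_i`, and `s_{μ_j} x - x = -⟨x, μ_j^∨⟩ μ_j` together
with `v_{j-1}(ε')(-μ_j) = v_j(ε')(μ_j) = α_j(ε')` gives the summand.
-/

section Weyl

variable {r : ℕ} {Λ : Type*} [AddCommGroup Λ] [Module ℤ Λ]
variable (α : Fin r → Λ) (s : Fin r → (Λ ≃ₗ[ℤ] Λ))
variable {N : ℕ} (μ : Fin N → Fin r)

/-- The product, in increasing order of indices, of the reflections `s_{μ_k}` for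
`k` in a finite set of positions. -/
def oprod (t : Finset (Fin N)) : Λ ≃ₗ[ℤ] Λ :=
  ((t.sort (· ≤ ·)).map (fun k => s (μ k))).prod

/-- `v_i(ε) = Π_{k≤i, k∈π₊(ε)} s_{μ_k}` applied to `μ_i`, i.e.
`α_i(ε) = v_i(ε)(μ_i) ∈ Λ`. -/
def alphaBS (i : Fin N) (ε : Fin N → Bool) : Λ :=
  oprod s μ (Finset.univ.filter (fun k => k ≤ i ∧ ε k = true)) (α (μ i))

/-- `v_{j+1}^i(ε) = Π_{j<k≤i, k∈π₊(ε)} s_{μ_k}`. -/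
def vSeg (ε : Fin N → Bool) (j i : Fin N) : Λ ≃ₗ[ℤ] Λ :=
  oprod s μ (Finset.univ.filter (fun k => j < k ∧ k ≤ i ∧ ε k = true))

/-- The canonical embedding of `Λ` into its symmetric algebra `Sym_ℤ(Λ)`, realized
(using the basis `bb` of the free `ℤ`-module `Λ`) as the polynomial ring
`MvPolynomial ι ℤ`: a lattice element is sent to the corresponding linear form. -/
noncomputable def toSym {ι : Type*} (bb : Module.Basis ι ℤ Λ) (x : Λ) : MvPolynomial ι ℤ :=
  (bb.repr x).sum fun i c => MvPolynomial.C c * MvPolynomial.X i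

/-- `σᵀ_ε(ε') = (−1)^{l(ε)} Π_{i∈π₊(ε)} α_i(ε')` in `Sym_ℤ(Λ)` if `ε ≤ ε'`, and `0`
otherwise. -/
noncomputable def sigmaT {ι : Type*} (bb : Module.Basis ι ℤ Λ) (ε ε' : Fin N → Bool) :
    MvPolynomial ι ℤ :=
  if ∀ i, ε i = true → ε' i = true then
    (-1) ^ (Finset.univ.filter (fun i => ε i = true)).card *
      ∏ i ∈ Finset.univ.filter (fun i => ε i = true), toSym bb (alphaBS α s μ i ε')
  else 0

end Weyl

/-- The element `(i)` of `ℰ` whose only nonzero entry is in position `i`. -/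
def deltaE {N : ℕ} (i : Fin N) : Fin N → Bool := fun j => decide (j = i)

/-- Componentwise sum mod 2, `ε + (j)`. -/
def addE {N : ℕ} (ε : Fin N → Bool) (j : Fin N) : Fin N → Bool :=
  fun k => xor (ε k) (decide (k = j))

theorem Finset.sort_union_of_lt {β : Type*} [LinearOrder β] {t u : Finset β}
    (h : ∀ a ∈ t, ∀ b ∈ u, a < b) :
    (t ∪ u).sort (· ≤ ·) = t.sort (· ≤ ·) ++ u.sort (· ≤ ·) := by
  refine List.Perm.eq_of_pairwise' (r := (· ≤ ·)) (Finset.pairwise_sort _ _) ?_ ?_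
  · refine List.pairwise_append.2 ⟨Finset.pairwise_sort _ _, Finset.pairwise_sort _ _, ?_⟩
    intro a ha b hb
    exact (h a ((Finset.mem_sort _).1 ha) b ((Finset.mem_sort _).1 hb)).le
  · refine List.perm_of_nodup_nodup_toFinset_eq (Finset.sort_nodup _ _) ?_ (by simp)
    refine List.nodup_append.2 ⟨Finset.sort_nodup _ _, Finset.sort_nodup _ _, ?_⟩
    rintro a ha _ hb rfl
    exact lt_irrefl a (h a ((Finset.mem_sort _).1 ha) a ((Finset.mem_sort _).1 hb))

section BottSamelson

variable {r : ℕ} {Λ : Type*} [AddCommGroup Λ] [Module ℤ Λ]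
variable (α : Fin r → Λ) (s : Fin r → (Λ ≃ₗ[ℤ] Λ)) (coroot : Fin r → (Λ →ₗ[ℤ] ℤ))
variable {N : ℕ} (μ : Fin N → Fin r) {ι : Type*} (bb : Module.Basis ι ℤ Λ)

@[simp]
theorem oprod_empty : oprod s μ ∅ = 1 := by
  simp [oprod]

@[simp]
theorem oprod_singleton (j : Fin N) : oprod s μ {j} = s (μ j) := by
  simp [oprod]

theorem oprod_union {t u : Finset (Fin N)} (h : ∀ a ∈ t, ∀ b ∈ u, a < b) :
    oprod s μ (t ∪ u) = oprod s μ t * oprod s μ u := by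
  rw [oprod, oprod, oprod, Finset.sort_union_of_lt h, List.map_append, List.prod_append]

theorem oprod_insert_of_lt {a : Fin N} {u : Finset (Fin N)} (h : ∀ b ∈ u, a < b) :
    oprod s μ (insert a u) = s (μ a) * oprod s μ u := by
  rw [Finset.insert_eq, oprod_union s μ (by simpa using h), oprod_singleton]

/-- Noncommutative telescoping: switching on, one at a time, the factors indexed by `u \ t`. -/
theorem oprod_sub_oprod {t u : Finset (Fin N)} (htu : t ⊆ u) (v : Λ) :
    oprod s μ u v - oprod s μ t v =
      ∑ k ∈ u \ t, oprod s μ (u.filter (· < k))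
        (s (μ k) (oprod s μ (t.filter (k < ·)) v) - oprod s μ (t.filter (k < ·)) v) := by
  induction u using Finset.induction_on_min generalizing t with
  | empty => simp [Finset.subset_empty.1 htu]
  | insert a u hau ih =>
    have hau' : a ∉ u := fun ha => lt_irrefl a (hau a ha)
    have hlow : ∀ k ∈ u, oprod s μ ((insert a u).filter (· < k)) =
        s (μ a) * oprod s μ (u.filter (· < k)) := fun k hk => by
      rw [Finset.filter_insert, if_pos (hau k hk),
        oprod_insert_of_lt s μ fun b hb => hau b (Finset.mem_filter.1 hb).1]
    rw [oprod_insert_of_lt s μ hau, LinearEquiv.mul_apply]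
    by_cases hat : a ∈ t
    · obtain ⟨t, hat₀, rfl⟩ : ∃ t₀, a ∉ t₀ ∧ t = insert a t₀ :=
        ⟨t.erase a, Finset.notMem_erase a t, (Finset.insert_erase hat).symm⟩
      have htu : t ⊆ u :=
        (Finset.subset_insert_iff_of_notMem hat₀).1 (Finset.insert_subset_iff.1 htu).2
      have hhigh : ∀ k ∈ u, (insert a t).filter (k < ·) = t.filter (k < ·) := fun k hk => by
        rw [Finset.filter_insert, if_neg (hau k hk).not_gt]
      rw [oprod_insert_of_lt s μ fun b hb => hau b (htu hb), LinearEquiv.mul_apply, ← map_sub,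
        ih htu, map_sum, Finset.insert_sdiff_insert, Finset.sdiff_insert_of_notMem hau']
      refine Finset.sum_congr rfl fun k hk => ?_
      have hku : k ∈ u := (Finset.mem_sdiff.1 hk).1
      rw [hlow k hku, hhigh k hku, LinearEquiv.mul_apply]
    · have htu : t ⊆ u := (Finset.subset_insert_iff_of_notMem hat).1 htu
      have hbelow : (insert a u).filter (· < a) = ∅ := by
        rw [Finset.filter_insert, if_neg (lt_irrefl a)]
        exact Finset.filter_false_of_mem fun b hb => (hau b hb).not_gt
      have habove : t.filter (a < ·) = t := Finset.filter_true_of_mem fun b hb => hau b (htu hb)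
      rw [Finset.insert_sdiff_of_notMem _ hat,
        Finset.sum_insert fun h => hau' (Finset.mem_sdiff.1 h).1, hbelow, habove, oprod_empty,
        LinearEquiv.coe_one, id,
        Finset.sum_congr rfl fun k hk => by
          rw [hlow k (Finset.mem_sdiff.1 hk).1, LinearEquiv.mul_apply],
        ← map_sum, ← ih htu, map_sub]
      abel

theorem reflection_sub_self (hs : ∀ i x, s i x = x - coroot i x • α i) (i : Fin r) (x : Λ) :
    s i x - x = -(coroot i x • α i) := by
  rw [hs]; abel

theorem reflection_root (hs : ∀ i x, s i x = x - coroot i x • α i)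
    (hdiag : ∀ i, coroot i (α i) = 2) (i : Fin r) : s i (α i) = -α i := by
  rw [hs, hdiag, two_zsmul]; abel

theorem alphaBS_of_true (hs : ∀ i x, s i x = x - coroot i x • α i)
    (hdiag : ∀ i, coroot i (α i) = 2) {ε : Fin N → Bool} {k : Fin N} (hk : ε k = true) :
    alphaBS α s μ k ε = -oprod s μ (Finset.univ.filter fun l => l < k ∧ ε l = true) (α (μ k)) := by
  have hsplit : Finset.univ.filter (fun l => l ≤ k ∧ ε l = true) =
      Finset.univ.filter (fun l => l < k ∧ ε l = true) ∪ {k} := by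
    ext l
    rcases lt_trichotomy l k with hlk | rfl | hkl
    · simp [hlk, hlk.le, hlk.ne]
    · simp [hk]
    · simp [hkl.not_ge, hkl.not_gt, hkl.ne']
  rw [alphaBS, hsplit, oprod_union s μ (by simp +contextual), LinearEquiv.mul_apply,
    oprod_singleton, reflection_root α s coroot hs hdiag, map_neg]

theorem alphaBS_sub_alphaBS (hs : ∀ i x, s i x = x - coroot i x • α i)
    (hdiag : ∀ i, coroot i (α i) = 2) {ε ε' : Fin N → Bool}
    (hle : ∀ k, ε k = true → ε' k = true) {i : Fin N} (hi : ε i = true) :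
    alphaBS α s μ i ε' - alphaBS α s μ i ε =
      ∑ j ∈ (Finset.univ.filter fun j => j < i ∧ ε j = false).filter (fun j => ε' j = true),
        coroot (μ j) (vSeg s μ ε j i (α (μ i))) • alphaBS α s μ j ε' := by
  set t := Finset.univ.filter fun k => k ≤ i ∧ ε k = true
  set u := Finset.univ.filter fun k => k ≤ i ∧ ε' k = true
  have htu : t ⊆ u := fun k hk => by simp_all [t, u]
  have hdiff : u \ t =
      (Finset.univ.filter fun j => j < i ∧ ε j = false).filter (fun j => ε' j = true) := by
    ext k
    by_cases hki : k = i
    · subst hki; simp [t, hi]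
    · simp [t, u, lt_iff_le_and_ne, hki]; tauto
  calc alphaBS α s μ i ε' - alphaBS α s μ i ε = oprod s μ u (α (μ i)) - oprod s μ t (α (μ i)) :=
        rfl
    _ = _ := oprod_sub_oprod s μ htu _
    _ = _ := by
      rw [hdiff]
      refine Finset.sum_congr rfl fun k hk => ?_
      simp only [Finset.mem_filter, Finset.mem_univ, true_and] at hk
      have hlow : u.filter (· < k) = Finset.univ.filter fun l => l < k ∧ ε' l = true := by
        ext l; simp only [u, Finset.mem_filter, Finset.mem_univ, true_and]
        exact ⟨fun ⟨⟨_, h⟩, hlk⟩ => ⟨hlk, h⟩, fun ⟨hlk, h⟩ => ⟨⟨(hlk.trans hk.1.1).le, h⟩, hlk⟩⟩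
      have hhigh : oprod s μ (t.filter (k < ·)) = vSeg s μ ε k i := by
        rw [vSeg]; congr 1; ext l; simp [t]; tauto
      rw [hlow, hhigh, reflection_sub_self α s coroot hs, map_neg, map_zsmul,
        alphaBS_of_true α s coroot μ hs hdiag hk.2]
      exact (zsmul_neg _ _).symm

noncomputable def toSymLinearMap : Λ →ₗ[ℤ] MvPolynomial ι ℤ :=
  Finsupp.linearCombination ℤ MvPolynomial.X ∘ₗ bb.repr.toLinearMap

theorem toSymLinearMap_apply (x : Λ) : toSymLinearMap bb x = toSym bb x := by
  simp only [toSymLinearMap, toSym, LinearMap.comp_apply, LinearEquiv.coe_coe,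
    Finsupp.linearCombination_apply, MvPolynomial.smul_eq_C_mul]

theorem sigmaT_eq_zero {ε ε' : Fin N → Bool} (h : ¬∀ k, ε k = true → ε' k = true) :
    sigmaT α s μ bb ε ε' = 0 :=
  if_neg h

theorem sigmaT_deltaE (i : Fin N) (ε' : Fin N → Bool) :
    sigmaT α s μ bb (deltaE i) ε' = if ε' i = true then -toSym bb (alphaBS α s μ i ε') else 0 := by
  have hfilter : Finset.univ.filter (fun k => deltaE i k = true) = {i} := by
    ext k; simp [deltaE]
  have hle : (∀ k, deltaE i k = true → ε' k = true) ↔ ε' i = true := by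
    simp [deltaE]
  rw [sigmaT, hfilter, if_congr hle rfl rfl]
  simp

theorem sigmaT_deltaE_mul {ε ε' : Fin N → Bool} {i : Fin N} (hi : ε i = false) :
    sigmaT α s μ bb (deltaE i) ε' * sigmaT α s μ bb ε ε' = sigmaT α s μ bb (addE ε i) ε' := by
  have hfilter : Finset.univ.filter (fun k => addE ε i k = true) =
      insert i (Finset.univ.filter fun k => ε k = true) := by
    ext k; by_cases hki : k = i <;> simp [addE, hki, hi]
  have hle : (∀ k, addE ε i k = true → ε' k = true) ↔
      (∀ k, ε k = true → ε' k = true) ∧ ε' i = true := by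
    constructor
    · intro h
      refine ⟨fun k hk => h k ?_, h i (by simp [addE, hi])⟩
      have hki : k ≠ i := by rintro rfl; simp [hk] at hi
      simpa [addE, hki] using hk
    · rintro ⟨h, hi'⟩ k hk
      by_cases hki : k = i
      · exact hki ▸ hi'
      · exact h k (by simpa [addE, hki] using hk)
  have hnot : i ∉ Finset.univ.filter fun k => ε k = true := by simp [hi]
  rw [sigmaT_deltaE]
  unfold sigmaT
  rw [if_congr hle rfl rfl, hfilter, Finset.card_insert_of_notMem hnot,
    Finset.prod_insert hnot]
  by_cases h₂ : ∀ k, ε k = true → ε' k = true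
  · by_cases h₁ : ε' i = true
    · rw [if_pos h₁, if_pos h₂, if_pos ⟨h₂, h₁⟩]
      ring
    · rw [if_neg h₁, zero_mul, if_neg fun h : _ ∧ _ => h₁ h.2]
  · rw [if_neg h₂, mul_zero, if_neg fun h : _ ∧ _ => h₂ h.1]

theorem sigmaT_deltaE_sub_sigmaT_deltaE (hs : ∀ i x, s i x = x - coroot i x • α i)
    (hdiag : ∀ i, coroot i (α i) = 2) {ε ε' : Fin N → Bool}
    (hle : ∀ k, ε k = true → ε' k = true) {i : Fin N} (hi : ε i = true) :
    sigmaT α s μ bb (deltaE i) ε' - sigmaT α s μ bb (deltaE i) ε =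
      ∑ j ∈ Finset.univ.filter (fun j => j < i ∧ ε j = false),
        coroot (μ j) (vSeg s μ ε j i (α (μ i))) • sigmaT α s μ bb (deltaE j) ε' := by
  rw [sigmaT_deltaE, sigmaT_deltaE, if_pos (hle i hi), if_pos hi, neg_sub_neg, ← neg_sub,
    ← toSymLinearMap_apply, ← toSymLinearMap_apply, ← map_sub,
    alphaBS_sub_alphaBS α s coroot μ hs hdiag hle hi, map_sum, Finset.sum_filter,
    ← Finset.sum_neg_distrib]
  refine Finset.sum_congr rfl fun j _ => ?_
  rw [sigmaT_deltaE]
  split_ifs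
  · rw [map_zsmul, toSymLinearMap_apply, zsmul_neg]
  · rw [smul_zero, neg_zero]

end BottSamelson

theorem sigmaT_mul_general {r : ℕ} {Λ : Type*} [AddCommGroup Λ] [Module ℤ Λ]
    {ι : Type*} (bb : Module.Basis ι ℤ Λ)
    (α : Fin r → Λ) (coroot : Fin r → (Λ →ₗ[ℤ] ℤ))
    (hdiag : ∀ i, coroot i (α i) = 2)
    (s : Fin r → (Λ ≃ₗ[ℤ] Λ)) (hs : ∀ i x, s i x = x - coroot i x • α i)
    {N : ℕ} (μ : Fin N → Fin r)
    (ε ε' : Fin N → Bool) (i : Fin N) :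
    (ε i = false →
      sigmaT α s μ bb (deltaE i) ε' * sigmaT α s μ bb ε ε'
        = sigmaT α s μ bb (addE ε i) ε') ∧
    (ε i = true →
      sigmaT α s μ bb (deltaE i) ε' * sigmaT α s μ bb ε ε'
        = sigmaT α s μ bb (deltaE i) ε * sigmaT α s μ bb ε ε'
          + ∑ j ∈ Finset.univ.filter (fun j => j < i ∧ ε j = false),
              coroot (μ j) (vSeg s μ ε j i (α (μ i))) •
                sigmaT α s μ bb (addE ε j) ε') := by
  refine ⟨sigmaT_deltaE_mul α s μ bb, fun hi => ?_⟩
  have hsum : ∑ j ∈ Finset.univ.filter (fun j => j < i ∧ ε j = false),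
        coroot (μ j) (vSeg s μ ε j i (α (μ i))) • sigmaT α s μ bb (addE ε j) ε' =
      (∑ j ∈ Finset.univ.filter (fun j => j < i ∧ ε j = false),
        coroot (μ j) (vSeg s μ ε j i (α (μ i))) • sigmaT α s μ bb (deltaE j) ε') *
          sigmaT α s μ bb ε ε' := by
    rw [Finset.sum_mul]
    refine Finset.sum_congr rfl fun j hj => ?_
    rw [smul_mul_assoc, sigmaT_deltaE_mul α s μ bb (Finset.mem_filter.1 hj).2.2]
  rw [hsum, ← add_mul]
  by_cases hle : ∀ k, ε k = true → ε' k = true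
  · rw [← sigmaT_deltaE_sub_sigmaT_deltaE α s coroot μ bb hs hdiag hle hi, add_sub_cancel]
  · rw [sigmaT_eq_zero α s μ bb hle, mul_zero, mul_zero]

/-- Multiplication rule for the equivariant cohomology basis of the Bott–Samelson
variety `Γ(μ_1,…,μ_N)`, on restrictions to fixed points: for `ε ∈ ℰ`, `1 ≤ i ≤ N`
and `ε' ∈ ℰ`:
(a) if `i ∈ π₋(ε)`, then `σᵀ_{(i)}(ε')·σᵀ_ε(ε') = σᵀ_{ε+(i)}(ε')`;
(b) if `i ∈ π₊(ε)`, then `σᵀ_{(i)}(ε')·σᵀ_ε(ε') = σᵀ_{(i)}(ε)·σᵀ_ε(ε')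
      + Σ_{j<i, j∈π₋(ε)} ⟨v_{j+1}^i(ε)(μ_i), μ_j^∨⟩·σᵀ_{ε+(j)}(ε')`. -/
theorem sigmaT_mul {r : ℕ} {Λ : Type*} [AddCommGroup Λ] [Module ℤ Λ]
    {ι : Type*} (bb : Module.Basis ι ℤ Λ)
    (α : Fin r → Λ) (coroot : Fin r → (Λ →ₗ[ℤ] ℤ))
    (hα : LinearIndependent ℤ α) (hcoroot : LinearIndependent ℤ coroot)
    (hdiag : ∀ i, coroot i (α i) = 2)
    (hoffdiag : ∀ i j, i ≠ j → coroot i (α j) ≤ 0)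
    (hsymzero : ∀ i j, coroot i (α j) = 0 → coroot j (α i) = 0)
    (s : Fin r → (Λ ≃ₗ[ℤ] Λ)) (hs : ∀ i x, s i x = x - coroot i x • α i)
    {N : ℕ} (hN : 1 ≤ N) (μ : Fin N → Fin r)
    (ε ε' : Fin N → Bool) (i : Fin N) :
    (ε i = false →
      sigmaT α s μ bb (deltaE i) ε' * sigmaT α s μ bb ε ε'
        = sigmaT α s μ bb (addE ε i) ε') ∧
    (ε i = true →
      sigmaT α s μ bb (deltaE i) ε' * sigmaT α s μ bb ε ε'
        = sigmaT α s μ bb (deltaE i) ε * sigmaT α s μ bb ε ε'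
          + ∑ j ∈ Finset.univ.filter (fun j => j < i ∧ ε j = false),
              coroot (μ j) (vSeg s μ ε j i (α (μ i))) •
                sigmaT α s μ bb (addE ε j) ε') :=
  sigmaT_mul_general bb α coroot hdiag s hs μ ε ε' i
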